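/- If C is measurable with λ(C) < ∞, ψ ∈ N, and Z_C(ψ) < ∞, then the point process ξ whose distribution is Z_C(ψ)^{-1}(1{0∈·} + ∑_{m≥1}(1/m!)∫_{C^m}1{∑δ_{x_j}∈·} κ_m(x_1,…,x_m,ψ) dλ^m) satisfies the GNZ equations with Papangelou intensity κ^{(C,ψ)}(x,μ) = κ(x,ψ+μ)1_C(x), and ξ is almost surely a finite counting measure supported in C. -/

import Mathlib

/-!
Under the law `Z⁻¹ • gibbsMeasure κ ν ψ`, a configuration with `m` points is `∑ j, δ (v j)`
with `v` distributed as `κ_m(v, ψ) dν^m / m!`. The cocycle property makes `κ_m(v, ψ)`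
symmetric in `v`, so in `∫ f(x, μ) dμ = ∑ j, f(v j, μ)` each of the `m + 1` summands of an
`(m + 1)`-point configuration contributes as much as the one for `v 0`. Splitting off `x = v 0`
factors `κ_{m+1}(v, ψ)` as `κ(x, ψ + ∑ j, δ (w j)) κ_m(w, ψ)`, and `(m + 1) / (m + 1)!` becomes
`1 / m!`: the GNZ equation holds term by term.
-/

open MeasureTheory ENNReal

attribute [local instance] Classical.propDecidable

namespace Gibbs

variable {X : Type*} [MeasurableSpace X]

noncomputable def diracSum (l : List X) : Measure X :=
  (l.map fun x => Measure.dirac x).sum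

noncomputable def diracSumFin {m : ℕ} (v : Fin m → X) : Measure X :=
  ∑ i, Measure.dirac (v i)

noncomputable def kappaList (κ : X → Measure X → ℝ≥0∞) : List X → Measure X → ℝ≥0∞
  | [], _ => 1
  | x :: l, μ => κ x (μ + diracSum l) * kappaList κ l μ

noncomputable def kappaFin (κ : X → Measure X → ℝ≥0∞) {m : ℕ}
    (v : Fin m → X) (μ : Measure X) : ℝ≥0∞ :=
  kappaList κ (List.ofFn v) μ

def Cocycle (κ : X → Measure X → ℝ≥0∞) : Prop :=
  ∀ (x y : X) (μ : Measure X),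
    κ x μ * κ y (μ + Measure.dirac x) = κ y μ * κ x (μ + Measure.dirac y)

def IsLocalization (Bseq : ℕ → Set X) : Prop :=
  Monotone Bseq ∧ (∀ j, MeasurableSet (Bseq j)) ∧ (⋃ j, Bseq j) = Set.univ

def IsCounting (Bseq : ℕ → Set X) (μ : Measure X) : Prop :=
  ∀ j, ∃ n : ℕ, μ (Bseq j) = n

structure IsFactorial (fact : Measure X → (m : ℕ) → Measure (Fin m → X)) : Prop where
  one : ∀ μ : Measure X, fact μ 1 = Measure.map (fun x => (fun _ : Fin 1 => x)) μ
  symm : ∀ (μ : Measure X) (m : ℕ) (σ : Equiv.Perm (Fin m)),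
    Measure.map (fun v => v ∘ σ) (fact μ m) = fact μ m
  recur : ∀ (μ : Measure X) (m : ℕ) (A : Set (Fin (m + 1) → X)), MeasurableSet A →
    fact μ (m + 1) A =
      ∫⁻ v, (μ {x | Fin.snoc v x ∈ A}
        - ∑ j : Fin m, Set.indicator A (fun _ => (1 : ℝ≥0∞)) (Fin.snoc v (v j))) ∂ fact μ m

noncomputable def enat (c : ℝ≥0∞) : ℕ := ⌊c.toReal⌋₊

noncomputable def elog (c : ℝ≥0∞) : EReal :=
  if c = 0 then ⊥ else if c = ⊤ then ⊤ else ((Real.log c.toReal : ℝ) : EReal)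

noncomputable def eexp (x : EReal) : ℝ≥0∞ :=
  if x = ⊥ then 0 else if x = ⊤ then ⊤ else ENNReal.ofReal (Real.exp x.toReal)

noncomputable def hamiltonian (κ : X → Measure X → ℝ≥0∞)
    (fact : Measure X → (m : ℕ) → Measure (Fin m → X)) (μ ψ : Measure X) : EReal :=
  if μ Set.univ = 0 then 0
  else if μ Set.univ = ⊤ then ⊤
  else - elog ((((enat (μ Set.univ)).factorial : ℝ≥0∞))⁻¹ *
    ∫⁻ v : Fin (enat (μ Set.univ)) → X, kappaFin κ v ψ ∂ fact μ (enat (μ Set.univ)))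

noncomputable def partitionZ (κ : X → Measure X → ℝ≥0∞) (lam : Measure X)
    (B : Set X) (ψ : Measure X) : ℝ≥0∞ :=
  1 + ∑' m : ℕ, (((m + 1).factorial : ℝ≥0∞))⁻¹ *
    ∫⁻ v : Fin (m + 1) → X, kappaFin κ v ψ ∂(Measure.pi fun _ : Fin (m + 1) => lam.restrict B)

noncomputable def kernelRestrict (κ : X → Measure X → ℝ≥0∞) (C : Set X) (ψ : Measure X) :
    X → Measure X → ℝ≥0∞ :=
  fun x μ => κ x (ψ + μ) * Set.indicator C (fun _ => (1 : ℝ≥0∞)) x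

open ProbabilityTheory

lemma diracSum_perm {l l' : List X} (h : l.Perm l') : diracSum l = diracSum l' :=
  (h.map _).sum_eq

lemma diracSum_ofFn {m : ℕ} (v : Fin m → X) : diracSum (List.ofFn v) = diracSumFin v := by
  simp [diracSum, diracSumFin, List.map_ofFn, List.sum_ofFn]

lemma diracSumFin_comp_perm {m : ℕ} (v : Fin m → X) (σ : Equiv.Perm (Fin m)) :
    diracSumFin (v ∘ σ) = diracSumFin v :=
  Fintype.sum_equiv σ _ _ fun _ => rfl

lemma diracSumFin_cons {m : ℕ} (x : X) (w : Fin m → X) :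
    diracSumFin (Fin.cons x w : Fin (m + 1) → X) = Measure.dirac x + diracSumFin w := by
  simp [diracSumFin, Fin.sum_univ_succ]

lemma diracSumFin_apply_univ {m : ℕ} (v : Fin m → X) : diracSumFin v Set.univ = m := by
  simp [diracSumFin, Measure.finsetSum_apply]

lemma diracSumFin_apply_eq_zero {m : ℕ} {v : Fin m → X} {s : Set X} (hs : MeasurableSet s)
    (hv : ∀ i, v i ∉ s) : diracSumFin v s = 0 := by
  simp [diracSumFin, Measure.finsetSum_apply, Measure.dirac_apply' _ hs, hv]

@[fun_prop]
lemma measurable_diracSumFin {m : ℕ} : Measurable (diracSumFin (X := X) (m := m)) := by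
  unfold diracSumFin
  fun_prop

lemma lintegral_diracSumFin {m : ℕ} (v : Fin m → X) {g : X → ℝ≥0∞} (hg : Measurable g) :
    ∫⁻ x, g x ∂diracSumFin v = ∑ j, g (v j) := by
  simp [diracSumFin, lintegral_finsetSum_measure, lintegral_dirac' _ hg]

section Kappa

variable {κ : X → Measure X → ℝ≥0∞}

lemma kappaList_perm (hcoc : Cocycle κ) {l l' : List X} (h : l.Perm l') (μ : Measure X) :
    kappaList κ l μ = kappaList κ l' μ := by
  induction h generalizing μ with
  | nil => rfl
  | cons x _ ih => simp only [kappaList, ih, diracSum_perm ‹_›]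
  | swap x y l =>
    have hshift (z : X) : μ + diracSum (z :: l) = μ + diracSum l + Measure.dirac z := by
      simp only [diracSum, List.map_cons, List.sum_cons]
      abel
    have hxy := hcoc y x (μ + diracSum l)
    simp only [kappaList, hshift]
    generalize μ + diracSum l = ρ at hxy ⊢
    calc _ = κ x ρ * κ y (ρ + Measure.dirac x) * kappaList κ l μ := by ring
      _ = κ y ρ * κ x (ρ + Measure.dirac y) * kappaList κ l μ := by rw [hxy]
      _ = _ := by ring
  | trans _ _ ih₁ ih₂ => rw [ih₁, ih₂]

lemma kappaFin_comp_perm (hcoc : Cocycle κ) {m : ℕ} (v : Fin m → X) (σ : Equiv.Perm (Fin m))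
    (μ : Measure X) : kappaFin κ (v ∘ σ) μ = kappaFin κ v μ :=
  kappaList_perm hcoc (σ.ofFn_comp_perm v) μ

lemma kappaFin_cons {m : ℕ} (x : X) (w : Fin m → X) (μ : Measure X) :
    kappaFin κ (Fin.cons x w : Fin (m + 1) → X) μ = κ x (μ + diracSumFin w) * kappaFin κ w μ := by
  simp [kappaFin, kappaList, diracSum_ofFn]

lemma kappaFin_fin_zero (v : Fin 0 → X) (μ : Measure X) : kappaFin κ v μ = 1 := by
  simp [kappaFin, kappaList]

lemma measurable_kappaFin (hκ : Measurable fun p : X × Measure X => κ p.1 p.2)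
    (ψ : Measure X) : ∀ m : ℕ, Measurable fun v : Fin m → X => kappaFin κ v ψ
  | 0 => by simp only [kappaFin_fin_zero]; exact measurable_const
  | m + 1 => by
    have hcons (v : Fin (m + 1) → X) : kappaFin κ v ψ =
        κ (v 0) (ψ + diracSumFin fun i => v i.succ) * kappaFin κ (fun i => v i.succ) ψ := by
      conv_lhs => rw [← Fin.cons_self_tail v]
      exact kappaFin_cons _ _ _
    simp only [hcons]
    have := measurable_kappaFin hκ ψ m
    fun_prop

end Kappa

section PiIntegrals

variable (ν : Measure X)

lemma lintegral_pi_comp_perm [SigmaFinite ν] {m : ℕ} (σ : Equiv.Perm (Fin m))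
    {g : (Fin m → X) → ℝ≥0∞} (hg : Measurable g) :
    ∫⁻ v, g (v ∘ σ) ∂Measure.pi (fun _ => ν) = ∫⁻ v, g v ∂Measure.pi (fun _ => ν) := by
  rw [← (measurePreserving_piCongrLeft (fun _ : Fin m => ν) σ.symm).lintegral_comp hg]
  congr! with v
  ext i
  simp [MeasurableEquiv.piCongrLeft, Equiv.piCongrLeft_apply]

lemma lintegral_pi_fin_succ [SigmaFinite ν] {m : ℕ} {g : (Fin (m + 1) → X) → ℝ≥0∞}
    (hg : Measurable g) :
    ∫⁻ v, g v ∂Measure.pi (fun _ => ν) =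
      ∫⁻ x, ∫⁻ w, g (Fin.cons x w) ∂Measure.pi (fun _ => ν) ∂ν := by
  rw [← ((measurePreserving_piFinSuccAbove (fun _ : Fin (m + 1) => ν) 0).symm).lintegral_comp hg,
    lintegral_prod _ (by fun_prop)]
  simp [MeasurableEquiv.piFinSuccAbove, Fin.consEquiv]

lemma lintegral_pi_fin_zero {g : (Fin 0 → X) → ℝ≥0∞} (hg : Measurable g) :
    ∫⁻ v, g v ∂Measure.pi (fun _ => ν) = g Fin.elim0 := by
  rw [Measure.pi_of_empty _ Fin.elim0, lintegral_dirac' _ hg]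

end PiIntegrals

/-- With `0⁻¹ = ⊤` and `⊤⁻¹ = 0`, this is the zero measure at `μ = 0` and at infinite `μ`, so it
is a finite kernel; it makes `μ ↦ ∫⁻ x, f x μ ∂μ` measurable on finite measures. -/
noncomputable def normalizedKernel : Kernel (Measure X) X where
  toFun μ := (μ Set.univ)⁻¹ • μ
  measurable' := Measure.measurable_of_measurable_coe _ fun s hs => by
    simp only [Measure.smul_apply, smul_eq_mul]
    exact (Measure.measurable_coe MeasurableSet.univ).inv.mul (Measure.measurable_coe hs)

instance : IsFiniteKernel (normalizedKernel (X := X)) :=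
  ⟨⟨1, one_lt_top, fun μ => by simp [normalizedKernel]⟩⟩

lemma measure_univ_smul_normalizedKernel {μ : Measure X} (hμ : μ Set.univ ≠ ⊤) :
    μ Set.univ • normalizedKernel μ = μ := by
  rcases eq_or_ne μ 0 with rfl | h0
  · simp
  · rw [normalizedKernel, Kernel.coe_mk, smul_smul,
      ENNReal.mul_inv_cancel (by simpa using h0) hμ, one_smul]

lemma exists_measurable_eq_lintegral_self {f : X → Measure X → ℝ≥0∞}
    (hf : Measurable fun p : X × Measure X => f p.1 p.2) :
    ∃ G : Measure X → ℝ≥0∞, Measurable G ∧ ∀ μ, μ Set.univ ≠ ⊤ → G μ = ∫⁻ x, f x μ ∂μ := by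
  refine ⟨fun μ => μ Set.univ * ∫⁻ x, f x μ ∂normalizedKernel μ, ?_, fun μ hμ => ?_⟩
  · exact (Measure.measurable_coe MeasurableSet.univ).mul
      (Measurable.lintegral_kernel_prod_right (hf.comp measurable_swap))
  · dsimp only
    rw [← smul_eq_mul, ← lintegral_smul_measure, measure_univ_smul_normalizedKernel hμ]

section GibbsMeasure

variable {κ : X → Measure X → ℝ≥0∞} {ν : Measure X} {ψ : Measure X}

/-- The unnormalized law of the Gibbs process; for `ν = lam.restrict C` its total mass is
`partitionZ κ lam C ψ`. -/
noncomputable def gibbsMeasure (κ : X → Measure X → ℝ≥0∞) (ν ψ : Measure X) :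
    Measure (Measure X) :=
  Measure.sum fun m : ℕ => (m.factorial : ℝ≥0∞)⁻¹ •
    ((Measure.pi fun _ : Fin m => ν).withDensity fun v => kappaFin κ v ψ).map diracSumFin

lemma lintegral_gibbsMeasure (hκ : Measurable fun p : X × Measure X => κ p.1 p.2)
    {G : Measure X → ℝ≥0∞} (hG : Measurable G) :
    ∫⁻ μ, G μ ∂gibbsMeasure κ ν ψ = ∑' m : ℕ, (m.factorial : ℝ≥0∞)⁻¹ *
      ∫⁻ v : Fin m → X, G (diracSumFin v) * kappaFin κ v ψ ∂Measure.pi fun _ => ν := by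
  rw [gibbsMeasure, lintegral_sum_measure]
  refine tsum_congr fun m => ?_
  rw [lintegral_smul_measure, lintegral_map hG measurable_diracSumFin,
    lintegral_withDensity_eq_lintegral_mul _ (measurable_kappaFin hκ ψ m) (by fun_prop)]
  simp only [smul_eq_mul, Pi.mul_apply, mul_comm]

lemma lintegral_gibbsMeasure_eq_zero_add (hκ : Measurable fun p : X × Measure X => κ p.1 p.2)
    {G : Measure X → ℝ≥0∞} (hG : Measurable G) :
    ∫⁻ μ, G μ ∂gibbsMeasure κ ν ψ = G 0 + ∑' m : ℕ, ((m + 1).factorial : ℝ≥0∞)⁻¹ *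
      ∫⁻ v : Fin (m + 1) → X, G (diracSumFin v) * kappaFin κ v ψ ∂Measure.pi fun _ => ν := by
  rw [lintegral_gibbsMeasure hκ hG, tsum_eq_zero_add' ENNReal.summable,
    lintegral_pi_fin_zero _ (by fun_prop)]
  simp [kappaFin_fin_zero, diracSumFin]

lemma gibbsMeasure_apply (hκ : Measurable fun p : X × Measure X => κ p.1 p.2)
    {A : Set (Measure X)} (hA : MeasurableSet A) :
    gibbsMeasure κ ν ψ A = Set.indicator A (fun _ => 1) 0 +
      ∑' m : ℕ, ((m + 1).factorial : ℝ≥0∞)⁻¹ *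
        ∫⁻ v : Fin (m + 1) → X, Set.indicator A (fun _ => 1) (diracSumFin v) * kappaFin κ v ψ
          ∂Measure.pi fun _ => ν := by
  rw [← lintegral_indicator_one hA]
  exact lintegral_gibbsMeasure_eq_zero_add hκ (measurable_const.indicator hA)

lemma ae_gibbsMeasure {p : Measure X → Prop} (hp : MeasurableSet {μ | p μ})
    (h : ∀ m, ∀ᵐ v ∂Measure.pi (fun _ : Fin m => ν), p (diracSumFin v)) :
    ∀ᵐ μ ∂gibbsMeasure κ ν ψ, p μ := by
  rw [gibbsMeasure, Measure.ae_sum_iff' hp]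
  refine fun m => Measure.ae_smul_measure ?_ _
  rw [ae_map_iff measurable_diracSumFin.aemeasurable hp]
  exact (withDensity_absolutelyContinuous _ _).ae_le (h m)

lemma ae_gibbsMeasure_finite_of_support [SigmaFinite ν] {C : Set X} (hC : MeasurableSet C)
    (hν : ν Cᶜ = 0) :
    ∀ᵐ μ ∂gibbsMeasure κ ν ψ, μ Set.univ < ⊤ ∧ μ Cᶜ = 0 := by
  refine ae_gibbsMeasure ?_ fun m => ?_
  · exact (measurableSet_lt (Measure.measurable_coe .univ) measurable_const).inter
      (Measure.measurable_coe hC.compl (measurableSet_singleton 0))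
  · have hmem : ∀ᵐ v ∂Measure.pi (fun _ : Fin m => ν), ∀ i, v i ∈ C :=
      ae_all_iff.2 fun i => ae_iff.2 (Measure.pi_eval_preimage_null (fun _ : Fin m => ν) hν)
    filter_upwards [hmem] with v hv
    exact ⟨by simp [diracSumFin_apply_univ],
      diracSumFin_apply_eq_zero hC.compl (by simpa using hv)⟩

end GibbsMeasure

section GNZ

variable {κ : X → Measure X → ℝ≥0∞} (ν : Measure X) [SigmaFinite ν] (ψ : Measure X)
  {f : X → Measure X → ℝ≥0∞}

lemma lintegral_eval_mul_kappaFin_eq (hcoc : Cocycle κ)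
    (hκ : Measurable fun p : X × Measure X => κ p.1 p.2)
    (hf : Measurable fun p : X × Measure X => f p.1 p.2) {m : ℕ} (i j : Fin m) :
    ∫⁻ v, f (v i) (diracSumFin v) * kappaFin κ v ψ ∂Measure.pi (fun _ => ν) =
      ∫⁻ v, f (v j) (diracSumFin v) * kappaFin κ v ψ ∂Measure.pi (fun _ => ν) := by
  have := measurable_kappaFin hκ ψ m
  conv_rhs => rw [← lintegral_pi_comp_perm ν (Equiv.swap i j) (by fun_prop)]
  simp [diracSumFin_comp_perm, kappaFin_comp_perm hcoc]

lemma lintegral_head_mul_kappaFin (hκ : Measurable fun p : X × Measure X => κ p.1 p.2)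
    (hf : Measurable fun p : X × Measure X => f p.1 p.2) {m : ℕ} :
    ∫⁻ v : Fin (m + 1) → X, f (v 0) (diracSumFin v) * kappaFin κ v ψ ∂Measure.pi (fun _ => ν) =
      ∫⁻ w : Fin m → X, (∫⁻ x, f x (diracSumFin w + Measure.dirac x) *
        κ x (ψ + diracSumFin w) ∂ν) * kappaFin κ w ψ ∂Measure.pi (fun _ => ν) := by
  have := measurable_kappaFin hκ ψ
  rw [lintegral_pi_fin_succ ν (by fun_prop)]
  simp only [Fin.cons_zero, diracSumFin_cons, kappaFin_cons, add_comm (Measure.dirac _)]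
  rw [lintegral_lintegral_swap (by fun_prop)]
  refine lintegral_congr fun w => ?_
  rw [← lintegral_mul_const _ (by fun_prop)]
  simp only [mul_assoc]

lemma lintegral_sum_eval_mul_kappaFin (hcoc : Cocycle κ)
    (hκ : Measurable fun p : X × Measure X => κ p.1 p.2)
    (hf : Measurable fun p : X × Measure X => f p.1 p.2) (m : ℕ) :
    ∫⁻ v : Fin (m + 1) → X, (∑ j, f (v j) (diracSumFin v)) * kappaFin κ v ψ
        ∂Measure.pi (fun _ => ν) =
      (m + 1) * ∫⁻ w : Fin m → X, (∫⁻ x, f x (diracSumFin w + Measure.dirac x) *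
        κ x (ψ + diracSumFin w) ∂ν) * kappaFin κ w ψ ∂Measure.pi (fun _ => ν) := by
  have := measurable_kappaFin hκ ψ (m + 1)
  simp_rw [Finset.sum_mul]
  rw [lintegral_finsetSum _ fun j _ => by fun_prop]
  simp_rw [lintegral_eval_mul_kappaFin_eq ν ψ hcoc hκ hf _ 0]
  rw [Finset.sum_const, Finset.card_univ, Fintype.card_fin, nsmul_eq_mul,
    lintegral_head_mul_kappaFin ν ψ hκ hf]
  norm_cast

end GNZ

lemma inv_factorial_succ_mul_succ (m : ℕ) :
    ((m + 1).factorial : ℝ≥0∞)⁻¹ * (m + 1) = (m.factorial : ℝ≥0∞)⁻¹ := by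
  rw [Nat.factorial_succ, Nat.cast_mul, ENNReal.mul_inv (by simp) (by simp), mul_right_comm,
    Nat.cast_succ, ENNReal.inv_mul_cancel (by simp) (by simp), one_mul]

theorem lintegral_lintegral_self_gibbsMeasure {κ : X → Measure X → ℝ≥0∞} {ν : Measure X}
    [SigmaFinite ν] {ψ : Measure X} (hcoc : Cocycle κ)
    (hκ : Measurable fun p : X × Measure X => κ p.1 p.2) {f : X → Measure X → ℝ≥0∞}
    (hf : Measurable fun p : X × Measure X => f p.1 p.2) :
    ∫⁻ μ, ∫⁻ x, f x μ ∂μ ∂gibbsMeasure κ ν ψ =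
      ∫⁻ μ, ∫⁻ x, f x (μ + Measure.dirac x) * κ x (ψ + μ) ∂ν ∂gibbsMeasure κ ν ψ := by
  obtain ⟨G, hG, hG_eq⟩ := exists_measurable_eq_lintegral_self hf
  have hG_zero : G 0 = 0 := by simp [hG_eq 0 (by simp)]
  have hG_diracSumFin {m : ℕ} (v : Fin m → X) :
      G (diracSumFin v) = ∑ j, f (v j) (diracSumFin v) := by
    rw [hG_eq _ (by simp [diracSumFin_apply_univ]), lintegral_diracSumFin v (by fun_prop)]
  have hfinite : ∀ᵐ μ ∂gibbsMeasure κ ν ψ, μ Set.univ ≠ ⊤ :=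
    ae_gibbsMeasure (Measure.measurable_coe .univ (measurableSet_singleton ⊤).compl)
      fun m => ae_of_all _ fun v => by simp [diracSumFin_apply_univ]
  calc ∫⁻ μ, ∫⁻ x, f x μ ∂μ ∂gibbsMeasure κ ν ψ = ∫⁻ μ, G μ ∂gibbsMeasure κ ν ψ :=
        lintegral_congr_ae <| hfinite.mono fun μ hμ => (hG_eq μ hμ).symm
    _ = ∑' m : ℕ, ((m + 1).factorial : ℝ≥0∞)⁻¹ * ((m + 1) *
          ∫⁻ w : Fin m → X, (∫⁻ x, f x (diracSumFin w + Measure.dirac x) *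
            κ x (ψ + diracSumFin w) ∂ν) * kappaFin κ w ψ ∂Measure.pi (fun _ => ν)) := by
      rw [lintegral_gibbsMeasure_eq_zero_add hκ hG, hG_zero, zero_add]
      simp_rw [hG_diracSumFin, lintegral_sum_eval_mul_kappaFin ν ψ hcoc hκ hf]
    _ = _ := by
      rw [lintegral_gibbsMeasure hκ (by fun_prop)]
      simp_rw [← mul_assoc, inv_factorial_succ_mul_succ]

lemma lintegral_mul_kernelRestrict {κ : X → Measure X → ℝ≥0∞} {C : Set X}
    (hC : MeasurableSet C) (lam ψ μ : Measure X) (g : X → ℝ≥0∞) :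
    ∫⁻ x, g x * kernelRestrict κ C ψ x μ ∂lam = ∫⁻ x, g x * κ x (ψ + μ) ∂lam.restrict C := by
  rw [← lintegral_indicator hC]
  congr with x
  by_cases hx : x ∈ C <;> simp [kernelRestrict, hx]

theorem finite_Gibbs_process_via_kappa_general
    {Ω : Type*} [MeasurableSpace Ω] (P : Measure Ω)
    (lam : Measure X)
    (κ : X → Measure X → ℝ≥0∞)
    (hκmeas : Measurable fun p : X × Measure X => κ p.1 p.2)
    (hcoc : Cocycle κ)
    (C : Set X) (hC : MeasurableSet C) (hlamC : lam C < ⊤)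
    (ψ : Measure X)
    (ξ : Ω → Measure X) (hξmeas : Measurable ξ)
    (hdist : ∀ A : Set (Measure X), MeasurableSet A →
      P {ω | ξ ω ∈ A}
        = (partitionZ κ lam C ψ)⁻¹ *
          (Set.indicator A (fun _ => (1 : ℝ≥0∞)) (0 : Measure X)
            + ∑' m : ℕ, (((m + 1).factorial : ℝ≥0∞))⁻¹ *
                ∫⁻ v : Fin (m + 1) → X,
                  Set.indicator A (fun _ => (1 : ℝ≥0∞)) (diracSumFin v) * kappaFin κ v ψ
                ∂(Measure.pi fun _ : Fin (m + 1) => lam.restrict C))) :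
    (∀ f : X → Measure X → ℝ≥0∞,
      Measurable (fun p : X × Measure X => f p.1 p.2) →
      ∫⁻ ω, ∫⁻ x, f x (ξ ω) ∂(ξ ω) ∂P
        = ∫⁻ ω, ∫⁻ x, f x (ξ ω + Measure.dirac x) * kernelRestrict κ C ψ x (ξ ω) ∂lam ∂P) ∧
    (∀ᵐ ω ∂P, ξ ω Set.univ < ⊤ ∧ ξ ω Cᶜ = 0) := by
  have : IsFiniteMeasure (lam.restrict C) := ⟨by simpa using hlamC⟩
  have hlaw : P.map ξ = (partitionZ κ lam C ψ)⁻¹ • gibbsMeasure κ (lam.restrict C) ψ := by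
    ext A hA
    rw [Measure.map_apply hξmeas hA, Measure.smul_apply, gibbsMeasure_apply hκmeas hA]
    exact hdist A hA
  have hsupport : ∀ᵐ μ ∂P.map ξ, μ Set.univ < ⊤ ∧ μ Cᶜ = 0 := by
    rw [hlaw]
    exact Measure.ae_smul_measure (ae_gibbsMeasure_finite_of_support hC (by simp [hC])) _
  refine ⟨fun f hf => ?_, ae_of_ae_map hξmeas.aemeasurable hsupport⟩
  obtain ⟨G, hG, hG_eq⟩ := exists_measurable_eq_lintegral_self hf
  simp_rw [lintegral_mul_kernelRestrict hC]
  rw [← lintegral_map' ⟨G, hG, hsupport.mono fun μ hμ => (hG_eq μ hμ.1.ne).symm⟩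
      hξmeas.aemeasurable,
    ← lintegral_map (f := fun μ => ∫⁻ x in C, f x (μ + Measure.dirac x) * κ x (ψ + μ) ∂lam)
      (by fun_prop) hξmeas, hlaw, lintegral_smul_measure, lintegral_smul_measure,
    lintegral_lintegral_self_gibbsMeasure hcoc hκmeas hf]

theorem finite_Gibbs_process_via_kappa
    {Ω : Type*} [MeasurableSpace Ω] (P : Measure Ω) [IsProbabilityMeasure P]
    (lam : Measure X)
    (κ : X → Measure X → ℝ≥0∞)
    (hκmeas : Measurable fun p : X × Measure X => κ p.1 p.2)
    (hκfin : ∀ (x : X) (μ : Measure X), κ x μ ≠ ⊤)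
    (hcoc : Cocycle κ)
    (C : Set X) (hC : MeasurableSet C) (hlamC : lam C < ⊤)
    (ψ : Measure X) (hZ : partitionZ κ lam C ψ < ⊤)
    (ξ : Ω → Measure X) (hξmeas : Measurable ξ)
    (hdist : ∀ A : Set (Measure X), MeasurableSet A →
      P {ω | ξ ω ∈ A}
        = (partitionZ κ lam C ψ)⁻¹ *
          (Set.indicator A (fun _ => (1 : ℝ≥0∞)) (0 : Measure X)
            + ∑' m : ℕ, (((m + 1).factorial : ℝ≥0∞))⁻¹ *
                ∫⁻ v : Fin (m + 1) → X,
                  Set.indicator A (fun _ => (1 : ℝ≥0∞)) (diracSumFin v) * kappaFin κ v ψ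
                ∂(Measure.pi fun _ : Fin (m + 1) => lam.restrict C))) :
    (∀ f : X → Measure X → ℝ≥0∞,
      Measurable (fun p : X × Measure X => f p.1 p.2) →
      ∫⁻ ω, ∫⁻ x, f x (ξ ω) ∂(ξ ω) ∂P
        = ∫⁻ ω, ∫⁻ x, f x (ξ ω + Measure.dirac x) * kernelRestrict κ C ψ x (ξ ω) ∂lam ∂P) ∧
    (∀ᵐ ω ∂P, ξ ω Set.univ < ⊤ ∧ ξ ω Cᶜ = 0) :=
  finite_Gibbs_process_via_kappa_general P lam κ hκmeas hcoc C hC hlamC ψ ξ hξmeas hdist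

end Gibbs
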